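/- Let Γ_ω ⇒ Δ_ω be the limit sequent of a failed search tree, and let ∼ be the smallest congruence on terms with s ∼ t whenever s = t ∈ Γ_ω. If t ∼ u, then Γ_ω ⇒ F[t/x] is cut-free provable in RTC^ω_G if and only if Γ_ω ⇒ F[u/x] is cut-free provable in RTC^ω_G. -/

import Mathlib

namespace TCPaper

attribute [local instance] Classical.propDecidable

/-- First-order signatures (function and relation symbols with arities). -/
structure Sig where
  Fn : Type
  ar : Fn → ℕ
  Rel : Type
  rar : Rel → ℕ

variable {σ : Sig}

/-- Terms of a first-order signature, over a countable set of variables. -/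
inductive Tm (σ : Sig) : Type
  | var : ℕ → Tm σ
  | fn : (f : σ.Fn) → (Fin (σ.ar f) → Tm σ) → Tm σ

noncomputable instance : DecidableEq (Tm σ) := Classical.decEq _

/-- Formulas of the language `L_RTC`: first-order logic with equality extended
with a reflexive transitive closure operator `(RTC_{x,y} φ)(s,t)`. -/
inductive Fml (σ : Sig) : Type
  | eq  : Tm σ → Tm σ → Fml σ
  | rel : (r : σ.Rel) → (Fin (σ.rar r) → Tm σ) → Fml σ
  | not : Fml σ → Fml σ
  | and : Fml σ → Fml σ → Fml σ
  | or  : Fml σ → Fml σ → Fml σ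
  | imp : Fml σ → Fml σ → Fml σ
  | all : ℕ → Fml σ → Fml σ
  | ex  : ℕ → Fml σ → Fml σ
  | rtc : ℕ → ℕ → Fml σ → Tm σ → Tm σ → Fml σ

noncomputable instance : DecidableEq (Fml σ) := Classical.decEq _

/-- Free variables of a term. -/
def Tm.fv : Tm σ → Finset ℕ
  | .var n => {n}
  | .fn _ ts => Finset.univ.sup fun i => (ts i).fv

/-- Free variables of a formula (`x` and `y` are bound in the body of
`(RTC_{x,y} φ)(s,t)`, but not in `s` and `t`). -/
def Fml.fv : Fml σ → Finset ℕ
  | .eq s t => s.fv ∪ t.fv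
  | .rel _ ts => Finset.univ.sup fun i => (ts i).fv
  | .not φ => φ.fv
  | .and φ ψ => φ.fv ∪ ψ.fv
  | .or φ ψ => φ.fv ∪ ψ.fv
  | .imp φ ψ => φ.fv ∪ ψ.fv
  | .all x φ => φ.fv.erase x
  | .ex x φ => φ.fv.erase x
  | .rtc x y φ s t => ((φ.fv.erase x).erase y) ∪ s.fv ∪ t.fv

/-- Simultaneous substitution in terms. -/
def Tm.subst (f : ℕ → Tm σ) : Tm σ → Tm σ
  | .var n => f n
  | .fn g ts => .fn g fun i => (ts i).subst f

/-- Protect a bound variable during substitution. -/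
def bindV (f : ℕ → Tm σ) (x : ℕ) : ℕ → Tm σ := fun n => if n = x then .var x else f n

/-- Simultaneous substitution in formulas (free occurrences only). -/
def Fml.subst (f : ℕ → Tm σ) : Fml σ → Fml σ
  | .eq s t => .eq (s.subst f) (t.subst f)
  | .rel r ts => .rel r fun i => (ts i).subst f
  | .not φ => .not (φ.subst f)
  | .and φ ψ => .and (φ.subst f) (ψ.subst f)
  | .or φ ψ => .or (φ.subst f) (ψ.subst f)
  | .imp φ ψ => .imp (φ.subst f) (ψ.subst f)
  | .all x φ => .all x (φ.subst (bindV f x))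
  | .ex x φ => .ex x (φ.subst (bindV f x))
  | .rtc x y φ s t => .rtc x y (φ.subst (bindV (bindV f x) y)) (s.subst f) (t.subst f)

def sub1 (x : ℕ) (t : Tm σ) : ℕ → Tm σ := fun n => if n = x then t else .var n

def sub2 (x : ℕ) (t : Tm σ) (y : ℕ) (u : Tm σ) : ℕ → Tm σ :=
  fun n => if n = x then t else if n = y then u else .var n

/-- `φ[t/x]`. -/
def Fml.subst1 (φ : Fml σ) (x : ℕ) (t : Tm σ) : Fml σ := φ.subst (sub1 x t)

/-- `φ[t/x, u/y]` (simultaneous). -/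
def Fml.subst2 (φ : Fml σ) (x : ℕ) (t : Tm σ) (y : ℕ) (u : Tm σ) : Fml σ :=
  φ.subst (sub2 x t y u)

def Fml.isRTC : Fml σ → Prop
  | .rtc _ _ _ _ _ => True
  | _ => False

def Fml.noRTC : Fml σ → Prop
  | .eq _ _ => True
  | .rel _ _ => True
  | .not φ => φ.noRTC
  | .and φ ψ => φ.noRTC ∧ ψ.noRTC
  | .or φ ψ => φ.noRTC ∧ ψ.noRTC
  | .imp φ ψ => φ.noRTC ∧ ψ.noRTC
  | .all _ φ => φ.noRTC
  | .ex _ φ => φ.noRTC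
  | .rtc _ _ _ _ _ => False

def iffF (a b : Fml σ) : Fml σ := .and (.imp a b) (.imp b a)

/-! ### Standard semantics -/

/-- Standard first-order structures. -/
structure Struct (σ : Sig) where
  D : Type
  dne : Nonempty D
  fn : (f : σ.Fn) → (Fin (σ.ar f) → D) → D
  rel : (r : σ.Rel) → (Fin (σ.rar r) → D) → Prop

def Tm.eval (M : Struct σ) (v : ℕ → M.D) : Tm σ → M.D
  | .var n => v n
  | .fn f ts => M.fn f fun i => (ts i).eval M v

/-- `v[x := a]`. -/
def updV {D : Type} (v : ℕ → D) (x : ℕ) (a : D) : ℕ → D := fun n => if n = x then a else v n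

/-- The standard satisfaction relation `M, v ⊨ φ`.  An `RTC` formula is satisfied
iff the endpoints are equal or there is a finite chain of `φ`-steps between them. -/
def Sat (M : Struct σ) : Fml σ → (ℕ → M.D) → Prop
  | .eq s t, v => s.eval M v = t.eval M v
  | .rel r ts, v => M.rel r fun i => (ts i).eval M v
  | .not φ, v => ¬ Sat M φ v
  | .and φ ψ, v => Sat M φ v ∧ Sat M ψ v
  | .or φ ψ, v => Sat M φ v ∨ Sat M ψ v
  | .imp φ ψ, v => Sat M φ v → Sat M ψ v
  | .all x φ, v => ∀ a : M.D, Sat M φ (updV v x a)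
  | .ex x φ, v => ∃ a : M.D, Sat M φ (updV v x a)
  | .rtc x y φ s t, v =>
      s.eval M v = t.eval M v ∨
      ∃ n : ℕ, 0 < n ∧ ∃ a : ℕ → M.D, a 0 = s.eval M v ∧ a n = t.eval M v ∧
        ∀ i < n, Sat M φ (updV (updV v x (a i)) y (a (i + 1)))

/-- Sequents: pairs of finite sets of formulas. -/
abbrev Sequent (σ : Sig) := Finset (Fml σ) × Finset (Fml σ)

/-- `M, v` invalidates `Γ ⇒ Δ`: all of `Γ` holds and all of `Δ` fails. -/
def Invalidates (M : Struct σ) (v : ℕ → M.D) (S : Sequent σ) : Prop :=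
  (∀ φ ∈ S.1, Sat M φ v) ∧ (∀ ψ ∈ S.2, ¬ Sat M ψ v)

/-- Validity w.r.t. the standard semantics: `⋀Γ → ⋁Δ` holds in every structure. -/
def Valid (S : Sequent σ) : Prop :=
  ∀ (M : Struct σ) (v : ℕ → M.D), (∀ φ ∈ S.1, Sat M φ v) → ∃ ψ ∈ S.2, Sat M ψ v

/-! ### Frames and Henkin semantics -/

/-- A frame: a first-order structure together with a set of admissible subsets. -/
structure Frame (σ : Sig) extends Struct σ where
  adm : Set (Set D)

/-- Satisfaction in frames: `RTC` formulas are interpreted via closure of all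
admissible sets under the `φ`-step relation. -/
def HSat (M : Frame σ) : Fml σ → (ℕ → M.D) → Prop
  | .eq s t, v => s.eval M.toStruct v = t.eval M.toStruct v
  | .rel r ts, v => M.rel r fun i => (ts i).eval M.toStruct v
  | .not φ, v => ¬ HSat M φ v
  | .and φ ψ, v => HSat M φ v ∧ HSat M ψ v
  | .or φ ψ, v => HSat M φ v ∨ HSat M ψ v
  | .imp φ ψ, v => HSat M φ v → HSat M ψ v
  | .all x φ, v => ∀ a : M.D, HSat M φ (updV v x a)
  | .ex x φ, v => ∃ a : M.D, HSat M φ (updV v x a)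
  | .rtc x y φ s t, v =>
      ∀ A ∈ M.adm, s.eval M.toStruct v ∈ A →
        (∀ a b : M.D, a ∈ A → HSat M φ (updV (updV v x a) y b) → b ∈ A) →
        t.eval M.toStruct v ∈ A

/-- Henkin structures: frames whose admissible sets are closed under parametric
definability. -/
def Frame.Henkin (M : Frame σ) : Prop :=
  ∀ (φ : Fml σ) (v : ℕ → M.D) (x : ℕ), { a : M.D | HSat M φ (updV v x a) } ∈ M.adm

/-- Validity w.r.t. Henkin semantics. -/
def HValid (S : Sequent σ) : Prop :=
  ∀ M : Frame σ, M.Henkin →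
    ∀ v : ℕ → M.D, (∀ φ ∈ S.1, HSat M φ v) → ∃ ψ ∈ S.2, HSat M ψ v

/-! ### Rule instances -/

def mkFn0 (f : σ.Fn) (h : σ.ar f = 0) : Tm σ := .fn f fun i => (Fin.cast h i).elim0
def mkFn1 (f : σ.Fn) (_h : σ.ar f = 1) (t : Tm σ) : Tm σ := .fn f fun _ => t
def mkFn2 (f : σ.Fn) (h : σ.ar f = 2) (a b : Tm σ) : Tm σ := .fn f fun i => ![a, b] (Fin.cast h i)
def mkRel2 (r : σ.Rel) (h : σ.rar r = 2) (a b : Tm σ) : Fml σ := .rel r fun i => ![a, b] (Fin.cast h i)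

/-- Free variables of a finite set of formulas. -/
def fvs (Γ : Finset (Fml σ)) : Finset ℕ := Γ.sup Fml.fv

/-- Instances of the inference rules.  Includes the rules of `LK_=` with
substitution, the `RTC` rules (reflexivity, step, unfolding and explicit
induction), the pairing rules, and the special arithmetical rules of `CA_G`
and `PA_G` (each system below selects the subset of rules it may use). -/
inductive RuleApp (σ : Sig) : Type
  | axm (φ : Fml σ)
  | wL (Γ Δ : Finset (Fml σ)) (φ : Fml σ)
  | wR (Γ Δ : Finset (Fml σ)) (φ : Fml σ)
  | andL (Γ Δ : Finset (Fml σ)) (φ ψ : Fml σ)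
  | andR (Γ Δ : Finset (Fml σ)) (φ ψ : Fml σ)
  | orL (Γ Δ : Finset (Fml σ)) (φ ψ : Fml σ)
  | orR (Γ Δ : Finset (Fml σ)) (φ ψ : Fml σ)
  | impL (Γ Δ : Finset (Fml σ)) (φ ψ : Fml σ)
  | impR (Γ Δ : Finset (Fml σ)) (φ ψ : Fml σ)
  | negL (Γ Δ : Finset (Fml σ)) (φ : Fml σ)
  | negR (Γ Δ : Finset (Fml σ)) (φ : Fml σ)
  | allL (Γ Δ : Finset (Fml σ)) (x : ℕ) (φ : Fml σ) (t : Tm σ)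
  | allR (Γ Δ : Finset (Fml σ)) (x : ℕ) (φ : Fml σ) (y : ℕ)
  | exL (Γ Δ : Finset (Fml σ)) (x : ℕ) (φ : Fml σ) (y : ℕ)
  | exR (Γ Δ : Finset (Fml σ)) (x : ℕ) (φ : Fml σ) (t : Tm σ)
  | eqL1 (Γ Δ : Finset (Fml σ)) (s t : Tm σ) (x : ℕ) (φ : Fml σ)
  | eqL2 (Γ Δ : Finset (Fml σ)) (s t : Tm σ) (x : ℕ) (φ : Fml σ)
  | eqR (t : Tm σ)
  | cut (Γ Δ Γ' Δ' : Finset (Fml σ)) (φ : Fml σ)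
  | sub (Γ Δ : Finset (Fml σ)) (f : ℕ → Tm σ)
  | rtcRefl (Γ Δ : Finset (Fml σ)) (x y : ℕ) (φ : Fml σ) (s : Tm σ)
  | rtcStep (Γ Δ : Finset (Fml σ)) (x y : ℕ) (φ : Fml σ) (s r t : Tm σ)
  | rtcUnf (Γ Δ : Finset (Fml σ)) (x y : ℕ) (φ : Fml σ) (s t : Tm σ) (z : ℕ)
  | ind (Γ Δ : Finset (Fml σ)) (x y : ℕ) (φ ψ : Fml σ) (s t : Tm σ)
  | pairR (Γ Δ : Finset (Fml σ)) (p : σ.Fn) (hp : σ.ar p = 2) (x y u v : ℕ)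
  | pairAx (Γ Δ : Finset (Fml σ)) (p : σ.Fn) (hp : σ.ar p = 2) (c : σ.Fn) (hc : σ.ar c = 0)
      (x y : ℕ)
  | zeroLt (Γ Δ : Finset (Fml σ)) (t : Tm σ) (x : ℕ) (z : σ.Fn) (hz : σ.ar z = 0)
      (sc : σ.Fn) (hs : σ.ar sc = 1) (lt : σ.Rel) (hl : σ.rar lt = 2)
  | paInd (Γ Δ : Finset (Fml σ)) (x : ℕ) (φ : Fml σ) (t : Tm σ) (z : σ.Fn) (hz : σ.ar z = 0)
      (sc : σ.Fn) (hs : σ.ar sc = 1)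

/-- The conclusion of a rule instance. -/
noncomputable def RuleApp.concl : RuleApp σ → Sequent σ
  | .axm φ => ({φ}, {φ})
  | .wL Γ Δ φ => (insert φ Γ, Δ)
  | .wR Γ Δ φ => (Γ, insert φ Δ)
  | .andL Γ Δ φ ψ => (insert (.and φ ψ) Γ, Δ)
  | .andR Γ Δ φ ψ => (Γ, insert (.and φ ψ) Δ)
  | .orL Γ Δ φ ψ => (insert (.or φ ψ) Γ, Δ)
  | .orR Γ Δ φ ψ => (Γ, insert (.or φ ψ) Δ)
  | .impL Γ Δ φ ψ => (insert (.imp φ ψ) Γ, Δ)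
  | .impR Γ Δ φ ψ => (Γ, insert (.imp φ ψ) Δ)
  | .negL Γ Δ φ => (insert (.not φ) Γ, Δ)
  | .negR Γ Δ φ => (Γ, insert (.not φ) Δ)
  | .allL Γ Δ x φ _ => (insert (.all x φ) Γ, Δ)
  | .allR Γ Δ x φ _ => (Γ, insert (.all x φ) Δ)
  | .exL Γ Δ x φ _ => (insert (.ex x φ) Γ, Δ)
  | .exR Γ Δ x φ _ => (Γ, insert (.ex x φ) Δ)
  | .eqL1 Γ Δ s t x φ => (insert (.eq s t) Γ, insert (φ.subst1 x t) Δ)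
  | .eqL2 Γ Δ s t x φ => (insert (.eq s t) Γ, insert (φ.subst1 x s) Δ)
  | .eqR t => (∅, {Fml.eq t t})
  | .cut Γ Δ Γ' Δ' _ => (Γ ∪ Γ', Δ ∪ Δ')
  | .sub Γ Δ f => (Γ.image (Fml.subst f), Δ.image (Fml.subst f))
  | .rtcRefl Γ Δ x y φ s => (Γ, insert (.rtc x y φ s s) Δ)
  | .rtcStep Γ Δ x y φ s _ t => (Γ, insert (.rtc x y φ s t) Δ)
  | .rtcUnf Γ Δ x y φ s t _ => (insert (.rtc x y φ s t) Γ, Δ)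
  | .ind Γ Δ x y φ ψ s t =>
      (insert (ψ.subst1 x s) (insert (.rtc x y φ s t) Γ), insert (ψ.subst1 x t) Δ)
  | .pairR Γ Δ _ _ x y u v =>
      (Γ, insert (.and (.eq (.var x) (.var u)) (.eq (.var y) (.var v))) Δ)
  | .pairAx Γ Δ p hp c hc x y =>
      (insert (.eq (mkFn2 p hp (.var x) (.var y)) (mkFn0 c hc)) Γ, Δ)
  | .zeroLt Γ Δ t _ z hz _ _ lt hl => (insert (mkRel2 lt hl (mkFn0 z hz) t) Γ, Δ)
  | .paInd Γ Δ x φ t _ _ _ _ => (Γ, insert (φ.subst1 x t) Δ)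

/-- The list of premises of a rule instance. -/
noncomputable def RuleApp.prems : RuleApp σ → List (Sequent σ)
  | .axm _ => []
  | .wL Γ Δ _ => [(Γ, Δ)]
  | .wR Γ Δ _ => [(Γ, Δ)]
  | .andL Γ Δ φ ψ => [(insert φ (insert ψ Γ), Δ)]
  | .andR Γ Δ φ ψ => [(Γ, insert φ Δ), (Γ, insert ψ Δ)]
  | .orL Γ Δ φ ψ => [(insert φ Γ, Δ), (insert ψ Γ, Δ)]
  | .orR Γ Δ φ ψ => [(Γ, insert φ (insert ψ Δ))]
  | .impL Γ Δ φ ψ => [(Γ, insert φ Δ), (insert ψ Γ, Δ)]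
  | .impR Γ Δ φ ψ => [(insert φ Γ, insert ψ Δ)]
  | .negL Γ Δ φ => [(Γ, insert φ Δ)]
  | .negR Γ Δ φ => [(insert φ Γ, Δ)]
  | .allL Γ Δ x φ t => [(insert (φ.subst1 x t) Γ, Δ)]
  | .allR Γ Δ x φ y => [(Γ, insert (φ.subst1 x (.var y)) Δ)]
  | .exL Γ Δ x φ y => [(insert (φ.subst1 x (.var y)) Γ, Δ)]
  | .exR Γ Δ x φ t => [(Γ, insert (φ.subst1 x t) Δ)]
  | .eqL1 Γ Δ s _ x φ => [(Γ, insert (φ.subst1 x s) Δ)]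
  | .eqL2 Γ Δ _ t x φ => [(Γ, insert (φ.subst1 x t) Δ)]
  | .eqR _ => []
  | .cut Γ Δ Γ' Δ' φ => [(Γ, insert φ Δ), (insert φ Γ', Δ')]
  | .sub Γ Δ _ => [(Γ, Δ)]
  | .rtcRefl _ _ _ _ _ _ => []
  | .rtcStep Γ Δ x y φ s r t =>
      [(Γ, insert (.rtc x y φ s r) Δ), (Γ, insert (φ.subst2 x r y t) Δ)]
  | .rtcUnf Γ Δ x y φ s t z =>
      [(insert (.eq s t) Γ, Δ),
       (insert (.rtc x y φ s (.var z)) (insert (φ.subst2 x (.var z) y t) Γ), Δ)]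
  | .ind Γ Δ x y φ ψ _ _ => [(insert ψ (insert φ Γ), insert (ψ.subst1 x (.var y)) Δ)]
  | .pairR Γ Δ p hp x y u v =>
      [(Γ, insert (.eq (mkFn2 p hp (.var x) (.var y)) (mkFn2 p hp (.var u) (.var v))) Δ)]
  | .pairAx _ _ _ _ _ _ _ _ => []
  | .zeroLt Γ Δ t x _ _ sc hs _ _ => [(insert (.eq t (mkFn1 sc hs (.var x))) Γ, Δ)]
  | .paInd Γ Δ x φ _ z hz sc hs =>
      [(Γ, insert (φ.subst1 x (mkFn0 z hz)) Δ),
       (insert φ Γ, insert (φ.subst1 x (mkFn1 sc hs (.var x))) Δ)]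

/-- The side conditions (freshness of eigenvariables, etc.) of a rule instance. -/
def RuleApp.ok : RuleApp σ → Prop
  | .allR Γ Δ x φ y => y ∉ fvs Γ ∧ y ∉ fvs Δ ∧ y ∉ (Fml.all x φ).fv
  | .exL Γ Δ x φ y => y ∉ fvs Γ ∧ y ∉ fvs Δ ∧ y ∉ (Fml.ex x φ).fv
  | .rtcUnf Γ Δ x y φ s t z => z ∉ fvs Γ ∧ z ∉ fvs Δ ∧ z ∉ (Fml.rtc x y φ s t).fv
  | .ind Γ Δ x y _ ψ _ _ =>
      x ∉ fvs Γ ∧ x ∉ fvs Δ ∧ y ∉ fvs Γ ∧ y ∉ fvs Δ ∧ y ∉ ψ.fv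
  | .zeroLt Γ Δ t x _ _ _ _ _ _ => x ∉ fvs Γ ∧ x ∉ fvs Δ ∧ x ∉ t.fv
  | .paInd Γ Δ x _ _ _ _ _ _ => x ∉ fvs Γ ∧ x ∉ fvs Δ
  | _ => True

def RuleApp.isCut : RuleApp σ → Prop
  | .cut _ _ _ _ _ => True
  | _ => False

def RuleApp.isInd : RuleApp σ → Prop
  | .ind _ _ _ _ _ _ _ _ => True
  | _ => False

def RuleApp.isUnf : RuleApp σ → Prop
  | .rtcUnf _ _ _ _ _ _ _ _ => True
  | _ => False

def RuleApp.isPairRule : RuleApp σ → Prop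
  | .pairR _ _ _ _ _ _ _ _ => True
  | .pairAx _ _ _ _ _ _ _ _ => True
  | _ => False

def RuleApp.isZeroLt : RuleApp σ → Prop
  | .zeroLt _ _ _ _ _ _ _ _ _ _ => True
  | _ => False

def RuleApp.isPAInd : RuleApp σ → Prop
  | .paInd _ _ _ _ _ _ _ _ _ => True
  | _ => False

def RuleApp.isRTCRule : RuleApp σ → Prop
  | .rtcRefl _ _ _ _ _ _ => True
  | .rtcStep _ _ _ _ _ _ _ _ => True
  | .rtcUnf _ _ _ _ _ _ _ _ => True
  | .ind _ _ _ _ _ _ _ _ => True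
  | _ => False

/-- Pairing rules must use the designated pairing symbol `p` and constant `c`. -/
def RuleApp.pairSym (p c : σ.Fn) : RuleApp σ → Prop
  | .pairR _ _ q _ _ _ _ _ => q = p
  | .pairAx _ _ q _ d _ _ _ => q = p ∧ d = c
  | _ => True

/-- Generic (non-progressing) trace pairs: the same `RTC` formula occurs in the
antecedents of the conclusion and of the `i`-th premise. -/
noncomputable def RuleApp.genTP (R : RuleApp σ) (i : ℕ) (τ τ' : Fml σ) : Prop :=
  τ.isRTC ∧ τ' = τ ∧ τ ∈ R.concl.1 ∧ ∃ S ∈ R.prems[i]?, τ ∈ S.1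

/-- Progressing trace pairs: the traced formula is the principal formula of an
unfolding rule and is followed by its immediate ancestor. -/
def RuleApp.progPair : RuleApp σ → ℕ → Fml σ → Fml σ → Prop
  | .rtcUnf _ _ x y φ s t z, i, τ, τ' =>
      i = 1 ∧ τ = .rtc x y φ s t ∧ τ' = .rtc x y φ s (.var z)
  | _, _, _, _ => False

/-- Trace pairs for a rule instance and a premise index. -/
noncomputable def RuleApp.tracePair (R : RuleApp σ) (i : ℕ) (τ τ' : Fml σ) : Prop :=
  match R with
  | .sub Γ _ f => i = 0 ∧ τ'.isRTC ∧ τ' ∈ Γ ∧ τ = τ'.subst f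
  | .rtcUnf _ _ _ _ _ _ _ _ => R.genTP i τ τ' ∨ R.progPair i τ τ'
  | _ => R.genTP i τ τ'
/-! ### Infinitary pre-proofs and proofs -/

/-- A (possibly infinite, non-well-founded) derivation tree using the rules
allowed by `Ok`, with open leaves (hypotheses/axioms) drawn from `H`.
Nodes are addressed by finite lists of natural numbers. -/
structure PrePf (σ : Sig) (Ok : RuleApp σ → Prop) (H : Set (Sequent σ)) where
  label : List ℕ → Option (Sequent σ)
  rule : List ℕ → Option (RuleApp σ)
  root_def : (label []).isSome
  prune : ∀ p i, label p = none → label (p ++ [i]) = none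
  rule_spec : ∀ p R, rule p = some R →
    R.ok ∧ Ok R ∧ label p = some R.concl ∧ ∀ i, label (p ++ [i]) = R.prems[i]?
  node_spec : ∀ p S, label p = some S →
    (rule p).isSome ∨ (S ∈ H ∧ ∀ i, label (p ++ [i]) = none)
  rule_none : ∀ p, label p = none → rule p = none

variable {Ok : RuleApp σ → Prop} {H : Set (Sequent σ)}

/-- The root sequent of a pre-proof. -/
noncomputable def PrePf.root (P : PrePf σ Ok H) : Sequent σ := (P.label []).get P.root_def

/-- Infinite paths in a pre-proof, starting at the root. -/
def PrePf.IsPath (P : PrePf σ Ok H) (π : ℕ → List ℕ) : Prop :=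
  π 0 = [] ∧ ∀ n, (∃ i, π (n + 1) = π n ++ [i]) ∧ (P.label (π n)).isSome

def PrePf.TPStep (P : PrePf σ Ok H) (π : ℕ → List ℕ) (n : ℕ) (τ τ' : Fml σ) : Prop :=
  ∃ R i, P.rule (π n) = some R ∧ π (n + 1) = π n ++ [i] ∧ R.tracePair i τ τ'

def PrePf.ProgStep (P : PrePf σ Ok H) (π : ℕ → List ℕ) (n : ℕ) (τ τ' : Fml σ) : Prop :=
  ∃ R i, P.rule (π n) = some R ∧ π (n + 1) = π n ++ [i] ∧ R.progPair i τ τ'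

/-- The global trace condition: every infinite path is followed (from some
point onwards) by some infinitely progressing trace. -/
def PrePf.GTC (P : PrePf σ Ok H) : Prop :=
  ∀ π, P.IsPath π → ∃ (k : ℕ) (τ : ℕ → Fml σ),
    (∀ n, P.TPStep π (k + n) (τ n) (τ (n + 1))) ∧
    ∀ n, ∃ m, n ≤ m ∧ P.ProgStep π (k + m) (τ m) (τ (m + 1))

/-- A pre-proof is regular if it has only finitely many distinct subtrees
(equivalently, it is representable as a finite, possibly cyclic, graph). -/
def PrePf.Regular (P : PrePf σ Ok H) : Prop :=
  Set.Finite { f : List ℕ → Option (Sequent σ) × Option (RuleApp σ) |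
    ∃ p, (P.label p).isSome ∧ f = fun q => (P.label (p ++ q), P.rule (p ++ q)) }

/-- A pre-proof is cut-free if it never uses the cut rule. -/
def PrePf.CutFree (P : PrePf σ Ok H) : Prop := ∀ p R, P.rule p = some R → ¬ R.isCut

/-- Finitary (well-founded) derivability from hypotheses `H` using rules `Ok`. -/
inductive Deriv (Ok : RuleApp σ → Prop) (H : Set (Sequent σ)) : Sequent σ → Prop
  | hyp (S : Sequent σ) : S ∈ H → Deriv Ok H S
  | app (R : RuleApp σ) : R.ok → Ok R → (∀ S ∈ R.prems, Deriv Ok H S) → Deriv Ok H R.concl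

/-- Rules of the finitary system `RTC_G`: `LK_=` with substitution, reflexivity,
step, and the explicit induction rule (no unfolding rule). -/
def okFin (R : RuleApp σ) : Prop :=
  ¬ R.isUnf ∧ ¬ R.isPairRule ∧ ¬ R.isZeroLt ∧ ¬ R.isPAInd

/-- Rules of the infinitary system `RTC^ω_G`: `LK_=` with substitution,
reflexivity, step and the unfolding rule (no explicit induction rule). -/
def okOmega (R : RuleApp σ) : Prop :=
  ¬ R.isInd ∧ ¬ R.isPairRule ∧ ¬ R.isZeroLt ∧ ¬ R.isPAInd

/-- Provability in the finitary system `RTC_G`. -/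
def RTCG (S : Sequent σ) : Prop := Deriv okFin ∅ S

/-- Provability in the infinitary system `RTC^ω_G`. -/
def RTCOmega (S : Sequent σ) : Prop := ∃ P : PrePf σ okOmega ∅, P.root = S ∧ P.GTC

/-- Cut-free provability in `RTC^ω_G`. -/
def RTCOmegaCF (S : Sequent σ) : Prop :=
  ∃ P : PrePf σ okOmega ∅, P.root = S ∧ P.GTC ∧ P.CutFree

/-- Provability in the cyclic system `CRTC^ω_G`: the subsystem of `RTC^ω_G`
comprising all and only the finite and regular infinite proofs. -/
def CRTC (S : Sequent σ) : Prop :=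
  ∃ P : PrePf σ okOmega ∅, P.root = S ∧ P.GTC ∧ P.Regular

/-! ### Cyclic proofs as finite graphs, and non-overlapping cycles -/

/-- A cyclic proof presented as a finite (possibly cyclic) proof graph. -/
structure CycPf (σ : Sig) (Ok : RuleApp σ → Prop) (H : Set (Sequent σ)) where
  n : ℕ
  npos : 0 < n
  lab : Fin n → Sequent σ
  rul : Fin n → Option (RuleApp σ)
  child : Fin n → ℕ → Option (Fin n)
  rul_spec : ∀ v R, rul v = some R →
    R.ok ∧ Ok R ∧ lab v = R.concl ∧ ∀ i, (child v i).map lab = R.prems[i]?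
  hyp_spec : ∀ v, rul v = none → lab v ∈ H ∧ ∀ i, child v i = none
  reach : ∀ v, Relation.ReflTransGen (fun a b => ∃ i, child a i = some b) ⟨0, npos⟩ v

def CycPf.Edge (G : CycPf σ Ok H) (a b : Fin G.n) : Prop := ∃ i, G.child a i = some b

def CycPf.IsPath (G : CycPf σ Ok H) (π : ℕ → Fin G.n) : Prop :=
  π 0 = ⟨0, G.npos⟩ ∧ ∀ m, ∃ i, G.child (π m) i = some (π (m + 1))

/-- The global trace condition for cyclic proof graphs. -/
def CycPf.GTC (G : CycPf σ Ok H) : Prop :=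
  ∀ π : ℕ → Fin G.n, G.IsPath π → ∃ (k : ℕ) (τ : ℕ → Fml σ),
    (∀ m, ∃ R i, G.rul (π (k + m)) = some R ∧ G.child (π (k + m)) i = some (π (k + m + 1)) ∧
        R.tracePair i (τ m) (τ (m + 1))) ∧
    ∀ m, ∃ m', m ≤ m' ∧ ∃ R i, G.rul (π (k + m')) = some R ∧
        G.child (π (k + m')) i = some (π (k + m' + 1)) ∧ R.progPair i (τ m') (τ (m' + 1))

/-- Basic cycles: paths starting and ending at the same node, with no other
repeated nodes. -/
def CycPf.IsBasicCycle (G : CycPf σ Ok H) (l : List (Fin G.n)) : Prop :=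
  ∃ h : l ≠ [], l.Nodup ∧ l.Chain' G.Edge ∧ G.Edge (l.getLast h) (l.head h)

/-- No two distinct basic cycles share a node. -/
def CycPf.NonOverlapping (G : CycPf σ Ok H) : Prop :=
  ∀ l₁ l₂, G.IsBasicCycle l₁ → G.IsBasicCycle l₂ → (∃ v, v ∈ l₁ ∧ v ∈ l₂) → l₁ ~r l₂

def CycPf.root (G : CycPf σ Ok H) : Sequent σ := G.lab ⟨0, G.npos⟩

/-- Provability in the normal cyclic system `NCRTC^ω_G`: cyclic proofs with
non-overlapping basic cycles. -/
def NCRTC (S : Sequent σ) : Prop :=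
  ∃ G : CycPf σ okOmega ∅, G.root = S ∧ G.GTC ∧ G.NonOverlapping

/-! ### Degrees of RTC formulas -/

/-- The degree of an `RTC` formula w.r.t. a model and valuation: `0` if the
endpoints coincide, and otherwise the length of a minimal witnessing chain. -/
noncomputable def degree (M : Struct σ) (v : ℕ → M.D) : Fml σ → ℕ
  | .rtc x y φ s t =>
      if s.eval M v = t.eval M v then 0
      else sInf { n : ℕ | ∃ a : ℕ → M.D, a 0 = s.eval M v ∧ a n = t.eval M v ∧
        ∀ i < n, Sat M φ (updV (updV v x (a i)) y (a (i + 1))) }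
  | _ => 0

/-! ### The congruence generated by the equations of a set of formulas -/

/-- The smallest congruence `∼` on terms such that `s ∼ t` whenever `s = t ∈ G`. -/
inductive TermCong (G : Set (Fml σ)) : Tm σ → Tm σ → Prop
  | base (s t : Tm σ) : Fml.eq s t ∈ G → TermCong G s t
  | refl (t : Tm σ) : TermCong G t t
  | symm {s t : Tm σ} : TermCong G s t → TermCong G t s
  | trans {s t u : Tm σ} : TermCong G s t → TermCong G t u → TermCong G s u
  | congr (f : σ.Fn) (ts us : Fin (σ.ar f) → Tm σ) :
      (∀ i, TermCong G (ts i) (us i)) → TermCong G (.fn f ts) (.fn f us)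

def limSetoid (G : Set (Fml σ)) : Setoid (Tm σ) :=
  ⟨TermCong G, ⟨TermCong.refl, TermCong.symm, TermCong.trans⟩⟩

/-- The counter-interpretation (Herbrand structure on terms quotiented by the
congruence generated by the equations in `G`). -/
noncomputable def Mω (G : Set (Fml σ)) : Struct σ where
  D := Quotient (limSetoid G)
  dne := ⟨Quotient.mk (limSetoid G) (.var 0)⟩
  fn f as := Quotient.mk (limSetoid G) (.fn f fun i => (as i).out)
  rel r as := ∃ ts : Fin (σ.rar r) → Tm σ,
    (∀ i, Quotient.mk (limSetoid G) (ts i) = as i) ∧ Fml.rel r ts ∈ G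

/-- The valuation `ρ_ω (x) = [x]` in the counter-interpretation. -/
noncomputable def ρω (G : Set (Fml σ)) : ℕ → (Mω G).D :=
  fun x => Quotient.mk (limSetoid G) (.var x)
/-! ### Schedules and search trees -/

/-- Schedule elements: compound formulas; quantified-formula/term pairs;
`RTC`-formula tuples `⟨(RTC_{x,y}φ)(s,t), r, z, Γ, Δ⟩`; and equality tuples
`⟨s = t, x, φ, n, Γ, Δ⟩` (with `n ∈ {1,2}` encoded as a boolean). -/
inductive SchedE (σ : Sig) : Type
  | cf : Fml σ → SchedE σ
  | qf : Fml σ → Tm σ → SchedE σ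
  | rtcE : Fml σ → Tm σ → ℕ → Finset (Fml σ) → Finset (Fml σ) → SchedE σ
  | eqE : Tm σ → Tm σ → ℕ → Fml σ → Bool → Finset (Fml σ) → Finset (Fml σ) → SchedE σ

/-- A schedule: an enumeration of schedule elements in which every element
appears infinitely often. -/
def FairSched (E : ℕ → SchedE σ) : Prop := ∀ (e : SchedE σ) (n : ℕ), ∃ m, n ≤ m ∧ E m = e

/-- Finite derivation trees with open nodes (`leaf`), axiomatically closed
nodes (`closed`, i.e. axiom instances closed after weakening), and rule nodes. -/
inductive PTree (σ : Sig) : Type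
  | leaf : Sequent σ → PTree σ
  | closed : Sequent σ → PTree σ
  | node : Sequent σ → RuleApp σ → List (PTree σ) → PTree σ

noncomputable def mkNode (S : Sequent σ) (R : RuleApp σ) : PTree σ :=
  .node S R (R.prems.map .leaf)

/-- A sequent is an axiom instance (up to weakening). -/
def axc (S : Sequent σ) : Prop := (∃ φ, φ ∈ S.1 ∧ φ ∈ S.2) ∨ (∃ t : Tm σ, Fml.eq t t ∈ S.2)

/-- A variable fresh for a sequent and a formula. -/
def freshFor (S : Sequent σ) (φ : Fml σ) : ℕ := ((fvs S.1 ∪ fvs S.2 ∪ φ.fv).sup id) + 1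

/-- One step of proof search at an open node, driven by a schedule element:
close axiom instances, and otherwise apply the left/right rules dictated by
the schedule element. -/
noncomputable def expandLeaf (e : SchedE σ) (S : Sequent σ) : PTree σ :=
  if axc S then .closed S else
  match e with
  | .cf (.not φ) =>
      if Fml.not φ ∈ S.1 then mkNode S (.negL S.1 S.2 φ)
      else if Fml.not φ ∈ S.2 then mkNode S (.negR S.1 S.2 φ)
      else .leaf S
  | .cf (.and φ ψ) =>
      if Fml.and φ ψ ∈ S.1 then mkNode S (.andL S.1 S.2 φ ψ)
      else if Fml.and φ ψ ∈ S.2 then mkNode S (.andR S.1 S.2 φ ψ)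
      else .leaf S
  | .cf (.or φ ψ) =>
      if Fml.or φ ψ ∈ S.1 then mkNode S (.orL S.1 S.2 φ ψ)
      else if Fml.or φ ψ ∈ S.2 then mkNode S (.orR S.1 S.2 φ ψ)
      else .leaf S
  | .cf (.imp φ ψ) =>
      if Fml.imp φ ψ ∈ S.1 then mkNode S (.impL S.1 S.2 φ ψ)
      else if Fml.imp φ ψ ∈ S.2 then mkNode S (.impR S.1 S.2 φ ψ)
      else .leaf S
  | .qf (.all x φ) t =>
      if Fml.all x φ ∈ S.1 then mkNode S (.allL S.1 S.2 x φ t)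
      else if Fml.all x φ ∈ S.2 then mkNode S (.allR S.1 S.2 x φ (freshFor S (Fml.all x φ)))
      else .leaf S
  | .qf (.ex x φ) t =>
      if Fml.ex x φ ∈ S.2 then mkNode S (.exR S.1 S.2 x φ t)
      else if Fml.ex x φ ∈ S.1 then mkNode S (.exL S.1 S.2 x φ (freshFor S (Fml.ex x φ)))
      else .leaf S
  | .rtcE (.rtc x y φ s t) r z Γ₀ Δ₀ =>
      if Fml.rtc x y φ s t ∈ S.1 ∧ S.1.erase (Fml.rtc x y φ s t) ⊆ Γ₀ ∧ S.2 ⊆ Δ₀ ∧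
         z ∉ fvs S.1 ∧ z ∉ fvs S.2 ∧ z ∉ (Fml.rtc x y φ s t).fv
      then mkNode S (.rtcUnf S.1 S.2 x y φ s t z)
      else if Fml.rtc x y φ s t ∈ S.2 then mkNode S (.rtcStep S.1 S.2 x y φ s r t)
      else .leaf S
  | .eqE s t x φ b Γ₀ Δ₀ =>
      if b then
        if Fml.eq s t ∈ S.1 ∧ φ.subst1 x t ∈ S.2 ∧ S.1 ⊆ Γ₀ ∧ S.2 ⊆ Δ₀
        then mkNode S (.eqL1 S.1 S.2 s t x φ) else .leaf S
      else
        if Fml.eq s t ∈ S.1 ∧ φ.subst1 x s ∈ S.2 ∧ S.1 ⊆ Γ₀ ∧ S.2 ⊆ Δ₀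
        then mkNode S (.eqL2 S.1 S.2 s t x φ) else .leaf S
  | _ => .leaf S

mutual
/-- Apply a proof-search step at every open node of a tree. -/
noncomputable def PTree.expand (e : SchedE σ) : PTree σ → PTree σ
  | .leaf S => expandLeaf e S
  | .closed S => .closed S
  | .node S R ts => .node S R (PTree.expandList e ts)

noncomputable def PTree.expandList (e : SchedE σ) : List (PTree σ) → List (PTree σ)
  | [] => []
  | t :: ts => t.expand e :: PTree.expandList e ts
end

/-- The stages `T_i` of the search tree for `S` w.r.t. the schedule `E`. -/
noncomputable def stages (E : ℕ → SchedE σ) (S : Sequent σ) : ℕ → PTree σ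
  | 0 => .leaf S
  | i + 1 => (stages E S i).expand (E i)

def PTree.seq : PTree σ → Sequent σ
  | .leaf S => S
  | .closed S => S
  | .node S _ _ => S

def PTree.rul : PTree σ → Option (RuleApp σ)
  | .node _ R _ => some R
  | _ => none

def PTree.isLeaf : PTree σ → Prop
  | .leaf _ => True
  | _ => False

/-- The subtree of a tree at a given address. -/
def PTree.subAt : PTree σ → List ℕ → Option (PTree σ)
  | T, [] => some T
  | .node _ _ ts, i :: p => (ts[i]?).bind fun t => t.subAt p
  | .leaf _, _ :: _ => none
  | .closed _, _ :: _ => none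

/-- The labelling of the limit `T_ω` of the stages of the search tree. -/
noncomputable def limLabel (T : ℕ → PTree σ) (p : List ℕ) : Option (Sequent σ) :=
  if h : ∃ (i : ℕ) (t : PTree σ), (T i).subAt p = some t
  then some h.choose_spec.choose.seq else none

/-- The rule applied at a node of the limit tree `T_ω` (if any). -/
noncomputable def limRule (T : ℕ → PTree σ) (p : List ℕ) : Option (RuleApp σ) :=
  if h : ∃ R : RuleApp σ, ∃ i : ℕ, ((T i).subAt p).bind PTree.rul = some R
  then some h.choose else none

/-- A node of `T_ω` which remains open (is never expanded nor closed). -/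
def limOpen (T : ℕ → PTree σ) (p : List ℕ) : Prop :=
  (∃ (i : ℕ) (t : PTree σ), (T i).subAt p = some t) ∧
  ∀ (i : ℕ) (t : PTree σ), (T i).subAt p = some t → t.isLeaf

def limIsPath (T : ℕ → PTree σ) (π : ℕ → List ℕ) : Prop :=
  π 0 = [] ∧ ∀ n, (∃ i, π (n + 1) = π n ++ [i]) ∧ (limLabel T (π n)).isSome

def limTP (T : ℕ → PTree σ) (π : ℕ → List ℕ) (n : ℕ) (τ τ' : Fml σ) : Prop :=
  ∃ R i, limRule T (π n) = some R ∧ π (n + 1) = π n ++ [i] ∧ R.tracePair i τ τ'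

def limProg (T : ℕ → PTree σ) (π : ℕ → List ℕ) (n : ℕ) (τ τ' : Fml σ) : Prop :=
  ∃ R i, limRule T (π n) = some R ∧ π (n + 1) = π n ++ [i] ∧ R.progPair i τ τ'

/-- A path of the limit tree is followed by an infinitely progressing trace. -/
def limFollowed (T : ℕ → PTree σ) (π : ℕ → List ℕ) : Prop :=
  ∃ (k : ℕ) (τ : ℕ → Fml σ),
    (∀ n, limTP T π (k + n) (τ n) (τ (n + 1))) ∧
    ∀ n, ∃ m, n ≤ m ∧ limProg T π (k + m) (τ m) (τ (m + 1))

/-- The limit `T_ω` of the proof search is an `RTC^ω_G` proof: it has no open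
nodes and satisfies the global trace condition. -/
def SearchIsProof (T : ℕ → PTree σ) : Prop :=
  (∀ p, ¬ limOpen T p) ∧ ∀ π, limIsPath T π → limFollowed T π

/-- `(Γ_ω, Δ_ω)` is a limit sequent of a failed proof search: either the sequent
of an open node of `T_ω`, or the union of all sequents along an untraceable
infinite branch of `T_ω`. -/
def IsLimitSeq (T : ℕ → PTree σ) (Γω Δω : Set (Fml σ)) : Prop :=
  (∃ p S, limLabel T p = some S ∧ limOpen T p ∧ Γω = ↑S.1 ∧ Δω = ↑S.2) ∨
  (∃ π, limIsPath T π ∧ ¬ limFollowed T π ∧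
    Γω = { φ | ∃ n S, limLabel T (π n) = some S ∧ φ ∈ S.1 } ∧
    Δω = { φ | ∃ n S, limLabel T (π n) = some S ∧ φ ∈ S.2 })

/-- Cut-free provability of some finite subsequent of an infinite 'sequent'. -/
def CFProvSub (Γω Δω : Set (Fml σ)) : Prop :=
  ∃ Γ Δ : Finset (Fml σ), ↑Γ ⊆ Γω ∧ ↑Δ ⊆ Δω ∧ RTCOmegaCF (Γ, Δ)
/-! ### Pairing -/

/-- The semantic pairing function induced by a binary function symbol. -/
def pairD (M : Struct σ) (p : σ.Fn) (hp : σ.ar p = 2) (a b : M.D) : M.D :=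
  M.fn p fun i => ![a, b] (Fin.cast hp i)

/-- Admissible structures: the designated binary symbol is interpreted as a
pairing function satisfying the standard pairing axioms. -/
def Admissible (M : Struct σ) (p : σ.Fn) (hp : σ.ar p = 2) (c : σ.Fn) (hc : σ.ar c = 0) : Prop :=
  (∀ a b a' b' : M.D, pairD M p hp a b = pairD M p hp a' b' → a = a' ∧ b = b') ∧
  (∀ a b : M.D, pairD M p hp a b ≠ M.fn c fun i => (Fin.cast hc i).elim0)

/-- Validity w.r.t. admissible standard semantics. -/
def AdmValid (p : σ.Fn) (hp : σ.ar p = 2) (c : σ.Fn) (hc : σ.ar c = 0) (S : Sequent σ) : Prop :=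
  ∀ M : Struct σ, Admissible M p hp c hc →
    ∀ v : ℕ → M.D, (∀ φ ∈ S.1, Sat M φ v) → ∃ ψ ∈ S.2, Sat M ψ v

/-- Validity w.r.t. admissible Henkin semantics. -/
def AdmHValid (p : σ.Fn) (hp : σ.ar p = 2) (c : σ.Fn) (hc : σ.ar c = 0) (S : Sequent σ) : Prop :=
  ∀ M : Frame σ, M.Henkin → Admissible M.toStruct p hp c hc →
    ∀ v : ℕ → M.D, (∀ φ ∈ S.1, HSat M φ v) → ∃ ψ ∈ S.2, HSat M ψ v

def okFinPair (p c : σ.Fn) (R : RuleApp σ) : Prop :=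
  ¬ R.isUnf ∧ ¬ R.isZeroLt ∧ ¬ R.isPAInd ∧ R.pairSym p c

def okOmegaPair (p c : σ.Fn) (R : RuleApp σ) : Prop :=
  ¬ R.isInd ∧ ¬ R.isZeroLt ∧ ¬ R.isPAInd ∧ R.pairSym p c

/-- Provability in `⟨RTC⟩_G` (the finitary system with pairing rules). -/
def PairRTCG (p c : σ.Fn) (S : Sequent σ) : Prop := Deriv (okFinPair p c) ∅ S

/-- Provability in `⟨RTC⟩^ω_G` (the infinitary system with pairing rules). -/
def PairRTCOmega (p c : σ.Fn) (S : Sequent σ) : Prop :=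
  ∃ P : PrePf σ (okOmegaPair p c) ∅, P.root = S ∧ P.GTC

/-! ### Arithmetical signatures and systems -/

inductive ArFn : Type | zero | succ | plus
deriving DecidableEq

/-- The signature `{0, s, +}` of `L_RTC` arithmetic. -/
def arSig : Sig where
  Fn := ArFn
  ar := fun f => match f with | .zero => 0 | .succ => 1 | .plus => 2
  Rel := Empty
  rar := fun r => r.elim

inductive CAFn : Type | zero | succ | plus | mult
deriving DecidableEq

inductive CARel : Type | lt
deriving DecidableEq

/-- The signature `{0, s, +, ·, <}` of the language of `CA_G` and `PA_G`. -/
def caSig : Sig where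
  Fn := CAFn
  ar := fun f => match f with | .zero => 0 | .succ => 1 | .plus => 2 | .mult => 2
  Rel := CARel
  rar := fun _ => 2

def zeroA : Tm arSig := mkFn0 ArFn.zero rfl
def succA (t : Tm arSig) : Tm arSig := mkFn1 ArFn.succ rfl t
def plusA (a b : Tm arSig) : Tm arSig := mkFn2 ArFn.plus rfl a b

def zeroC : Tm caSig := mkFn0 CAFn.zero rfl
def succC (t : Tm caSig) : Tm caSig := mkFn1 CAFn.succ rfl t
def plusC (a b : Tm caSig) : Tm caSig := mkFn2 CAFn.plus rfl a b
def multC (a b : Tm caSig) : Tm caSig := mkFn2 CAFn.mult rfl a b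
def ltC (a b : Tm caSig) : Fml caSig := mkRel2 CARel.lt rfl a b

/-- `N(t) := (RTC_{w,u} s(w)=u)(0, t)`. -/
def NatA (t : Tm arSig) : Fml arSig := .rtc 0 1 (.eq (succA (.var 0)) (.var 1)) zeroA t

/-- The arithmetical axioms added to the `TC` systems:
`s(x)=0 ⇒`, `s(x)=s(y) ⇒ x=y`, `⇒ x+0=x`, `⇒ x+s(y)=s(x+y)`, and
`⇒ (RTC_{w,u} s(w)=u)(0,x)`. -/
inductive ArAx : Sequent arSig → Prop
  | s0 (t : Tm arSig) : ArAx ({Fml.eq (succA t) zeroA}, ∅)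
  | sInj (t u : Tm arSig) : ArAx ({Fml.eq (succA t) (succA u)}, {Fml.eq t u})
  | p0 (t : Tm arSig) : ArAx (∅, {Fml.eq (plusA t zeroA) t})
  | pS (t u : Tm arSig) : ArAx (∅, {Fml.eq (plusA t (succA u)) (succA (plusA t u))})
  | nat (t : Tm arSig) : ArAx (∅, {NatA t})

/-- Provability in `RTC_G + A`. -/
def RTCGA (S : Sequent arSig) : Prop := Deriv okFin {S | ArAx S} S

/-- Provability in `CRTC^ω_G + A`. -/
def CRTCA (S : Sequent arSig) : Prop :=
  ∃ P : PrePf arSig okOmega {S | ArAx S}, P.root = S ∧ P.GTC ∧ P.Regular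

/-- The basic axioms of cyclic arithmetic `CA_G`. -/
inductive CAAx : Sequent caSig → Prop
  | ltTrans (t u v : Tm caSig) : CAAx ({ltC t u, ltC u v}, {ltC t v})
  | ltAsym (t u : Tm caSig) : CAAx ({ltC t u, ltC u t}, ∅)
  | ltDiscr (t u : Tm caSig) : CAAx ({ltC t u, ltC u (succC t)}, ∅)
  | ltZero (t : Tm caSig) : CAAx ({ltC t zeroC}, ∅)
  | ltSuccMono (t u : Tm caSig) : CAAx ({ltC t u}, {ltC (succC t) (succC u)})
  | ltSucc (t : Tm caSig) : CAAx (∅, {ltC t (succC t)})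
  | trich (t u : Tm caSig) : CAAx (∅, {ltC t u, Fml.eq t u, ltC u t})
  | plus0 (t : Tm caSig) : CAAx (∅, {Fml.eq (plusC t zeroC) t})
  | plusS (t u : Tm caSig) : CAAx (∅, {Fml.eq (plusC t (succC u)) (succC (plusC t u))})
  | mult0 (t : Tm caSig) : CAAx (∅, {Fml.eq (multC t zeroC) zeroC})
  | multS (t u : Tm caSig) :
      CAAx (∅, {Fml.eq (multC t (succC u)) (plusC (multC t u) t)})

/-- The axioms of the Gentzen-style system `PA_G` for Peano arithmetic. -/
inductive PAAx : Sequent caSig → Prop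
  | ca (S : Sequent caSig) : CAAx S → PAAx S
  | s0 (t : Tm caSig) : PAAx ({Fml.eq (succC t) zeroC}, ∅)
  | sInj (t u : Tm caSig) : PAAx ({Fml.eq (succC t) (succC u)}, {Fml.eq t u})

/-- The rules allowed in `CA_G`: pure `LK_=` with substitution, plus the rule
deriving `Γ, 0 < t ⇒ Δ` from `Γ, t = s(x) ⇒ Δ` (`x` fresh). -/
def okCA (R : RuleApp caSig) : Prop :=
  ¬ R.isRTCRule ∧ ¬ R.isPairRule ∧ ¬ R.isPAInd ∧
  (match R with
   | .zeroLt _ _ _ _ z _ sc _ ltr _ => z = CAFn.zero ∧ sc = CAFn.succ ∧ ltr = CARel.lt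
   | _ => True)

/-- The rules allowed in `PA_G`: pure `LK_=` with substitution plus induction. -/
def okPA (R : RuleApp caSig) : Prop :=
  ¬ R.isRTCRule ∧ ¬ R.isPairRule ∧ ¬ R.isZeroLt ∧
  (match R with
   | .paInd _ _ _ _ _ z _ sc _ => z = CAFn.zero ∧ sc = CAFn.succ
   | _ => True)

/-- Provability in Gentzen-style Peano arithmetic `PA_G`. -/
def PAProv (S : Sequent caSig) : Prop := Deriv okPA {S | PAAx S} S

/-- The non-progressing steps of a `CA_G` term trace. -/
def RuleApp.caNP : RuleApp caSig → Tm caSig → Tm caSig → Prop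
  | .sub _ _ f, t, t' => t = t'.subst f
  | _, t, t' => t' = t

/-- The progressing steps of a `CA_G` term trace: the antecedent of the premise
contains `t' < t`. -/
noncomputable def RuleApp.caProg (R : RuleApp caSig) (i : ℕ) (t t' : Tm caSig) : Prop :=
  ∃ S ∈ R.prems[i]?, ltC t' t ∈ S.1

/-- The global trace condition of `CA_G` (tracing terms, with progression at
formulas `t' < t`). -/
def CAGTCP (P : PrePf caSig okCA {S | CAAx S}) : Prop :=
  ∀ π, P.IsPath π → ∃ (k : ℕ) (τ : ℕ → Tm caSig),
    (∀ n, ∃ R i, P.rule (π (k + n)) = some R ∧ π (k + n + 1) = π (k + n) ++ [i] ∧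
        (R.caNP (τ n) (τ (n + 1)) ∨ R.caProg i (τ n) (τ (n + 1)))) ∧
    ∀ n, ∃ m, n ≤ m ∧ ∃ R i, P.rule (π (k + m)) = some R ∧
        π (k + m + 1) = π (k + m) ++ [i] ∧ R.caProg i (τ m) (τ (m + 1))

/-- Provability in Simpson's cyclic arithmetic `CA_G`: regular infinite
derivations from the arithmetical axioms satisfying the trace condition. -/
def CAProv (S : Sequent caSig) : Prop :=
  ∃ P : PrePf caSig okCA {S | CAAx S}, P.root = S ∧ P.Regular ∧ CAGTCP P
/-! ### Translations between the arithmetical languages -/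

/-- Embedding of `{0,s,+}`-terms into the language of arithmetic. -/
def Tm.toCA : Tm arSig → Tm caSig
  | .var n => .var n
  | .fn .zero _ => zeroC
  | .fn .succ ts => succC (ts ⟨0, by decide⟩).toCA
  | .fn .plus ts => plusC (ts ⟨0, by decide⟩).toCA (ts ⟨1, by decide⟩).toCA

/-- `B(c, u, v)`: instantiating the three designated free variables `0, 1, 2`
of a β-function formula. -/
def BApp (B : Fml caSig) (c u v : Tm caSig) : Fml caSig :=
  B.subst fun n => if n = 0 then c else if n = 1 then u else if n = 2 then v else .var n

def leC (a b : Tm caSig) : Fml caSig := .or (.eq a b) (ltC a b)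

/-- The β-translation `φ^β`: first-order formulas are translated to themselves
and `((RTC_{x,y}φ)(s,t))^β` is
`s=t ∨ ∃z,c. B(c,0,s) ∧ B(c,s(z),t) ∧ ∀u≤z ∃v,w. B(c,u,v) ∧ B(c,s(u),w) ∧ φ^β[v/x,w/y]`. -/
def betaTr (B : Fml caSig) : Fml arSig → Fml caSig
  | .eq s t => .eq s.toCA t.toCA
  | .rel r _ => r.elim
  | .not φ => .not (betaTr B φ)
  | .and φ ψ => .and (betaTr B φ) (betaTr B ψ)
  | .or φ ψ => .or (betaTr B φ) (betaTr B ψ)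
  | .imp φ ψ => .imp (betaTr B φ) (betaTr B ψ)
  | .all x φ => .all x (betaTr B φ)
  | .ex x φ => .ex x (betaTr B φ)
  | .rtc x y φ s t =>
      let φb := betaTr B φ
      let sC := Tm.toCA s
      let tC := Tm.toCA t
      let m := ((φb.fv ∪ sC.fv ∪ tC.fv ∪ B.fv ∪ {x, y}).sup id) + 1
      -- z := m, c := m+1, u := m+2, v := m+3, w := m+4
      .or (.eq sC tC)
        (.ex m (.ex (m+1)
          (.and (BApp B (.var (m+1)) zeroC sC)
          (.and (BApp B (.var (m+1)) (succC (.var m)) tC)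
            (.all (m+2) (.imp (leC (.var (m+2)) (.var m))
              (.ex (m+3) (.ex (m+4)
                (.and (BApp B (.var (m+1)) (.var (m+2)) (.var (m+3)))
                (.and (BApp B (.var (m+1)) (succC (.var (m+2))) (.var (m+4)))
                  (φb.subst2 x (.var (m+3)) y (.var (m+4)))))))))))))

/-- β-translation of sequents. -/
noncomputable def betaSeq (B : Fml caSig) (S : Sequent arSig) : Sequent caSig :=
  (S.1.image (betaTr B), S.2.image (betaTr B))

/-- Numerals. -/
def numC : ℕ → Tm caSig
  | 0 => zeroC
  | n + 1 => succC (numC n)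

/-- `B` captures a β-function in `PA_G`: it has (at most) the three designated
free variables; it is provably functional and total; and every finite sequence
of naturals is provably coded by some `c`. -/
def CapturesBeta (B : Fml caSig) : Prop :=
  B.fv ⊆ {0, 1, 2} ∧
  PAProv ({BApp B (.var 0) (.var 1) (.var 2), BApp B (.var 0) (.var 1) (.var 3)},
          {Fml.eq (.var 2) (.var 3)}) ∧
  PAProv (∅, {Fml.ex 2 (BApp B (.var 0) (.var 1) (.var 2))}) ∧
  ∀ l : List ℕ, ∃ c : ℕ, ∀ (i : ℕ) (h : i < l.length),
    PAProv (∅, {BApp B (numC c) (numC i) (numC (l.get ⟨i, h⟩))})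

/-- Divisibility, defined in `L_RTC` over `{0,s,+}`:
`a ∣ b := (RTC_{p,q} q = p + a)(0, b)`. -/
def dvdA (a b : Tm arSig) : Fml arSig :=
  let m := ((a.fv ∪ b.fv).sup id) + 1
  .rtc m (m+1) (.eq (.var (m+1)) (plusA (.var m) a)) zeroA b

/-- `l = lcm(a,b)`, expressed via divisibility. -/
def lcmA (a b l : Tm arSig) : Fml arSig :=
  let k := ((a.fv ∪ b.fv ∪ l.fv).sup id) + 1
  .and (dvdA a l) (.and (dvdA b l)
    (.all k (.imp (.and (dvdA a (.var k)) (dvdA b (.var k))) (dvdA l (.var k)))))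

/-- `r = a²`, via `lcm(a, a+1) = a² + a` (Julia Robinson). -/
def sqA (a r : Tm arSig) : Fml arSig :=
  let k := ((a.fv ∪ r.fv).sup id) + 1
  .ex k (.and (lcmA a (succA a) (.var k)) (.eq (.var k) (plusA r a)))

/-- `p = a·b`, the TC definition of multiplication over `{0,s,+}`
(via `(a+b)² = a² + b² + 2ab`). -/
def mulA (a b p : Tm arSig) : Fml arSig :=
  let m := ((a.fv ∪ b.fv ∪ p.fv).sup id) + 1
  .ex m (.ex (m+1) (.ex (m+2)
    (.and (sqA a (.var m)) (.and (sqA b (.var (m+1)))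
      (.and (sqA (plusA a b) (.var (m+2)))
        (.eq (.var (m+2)) (plusA (plusA (.var m) (.var (m+1))) (plusA p p))))))))

/-- The TC translation of the strict order:
`s < t := s ≠ t ∧ (RTC_{w,u} s(w)=u)(s,t)`. -/
def ltA (s t : Tm arSig) : Fml arSig :=
  .and (.not (.eq s t)) (.rtc 0 1 (.eq (succA (.var 0)) (.var 1)) s t)

/-- Multiplication-free terms of the arithmetic language embed into `{0,s,+}`. -/
def Tm.noMult : Tm caSig → Option (Tm arSig)
  | .var n => some (.var n)
  | .fn .zero _ => some zeroA
  | .fn .succ ts => ((ts ⟨0, by decide⟩).noMult).map succA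
  | .fn .plus ts =>
      match (ts ⟨0, by decide⟩).noMult, (ts ⟨1, by decide⟩).noMult with
      | some a, some b => some (plusA a b)
      | _, _ => none
  | .fn .mult _ => none

/-- Flattening of an arithmetic term: `tmFlat t x` is an `L_RTC` formula
over `{0,s,+}` expressing `x = t`, with multiplication replaced by its TC
definition. -/
def tmFlat : Tm caSig → ℕ → Fml arSig
  | .var n, x => .eq (.var x) (.var n)
  | .fn .zero _, x => .eq (.var x) zeroA
  | .fn .succ ts, x =>
      let t := ts ⟨0, by decide⟩
      let y := ((t.fv ∪ {x}).sup id) + 1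
      .ex y (.and (tmFlat t y) (.eq (.var x) (succA (.var y))))
  | .fn .plus ts, x =>
      let a := ts ⟨0, by decide⟩
      let b := ts ⟨1, by decide⟩
      let y := ((a.fv ∪ b.fv ∪ {x}).sup id) + 1
      .ex y (.ex (y+1) (.and (tmFlat a y) (.and (tmFlat b (y+1))
        (.eq (.var x) (plusA (.var y) (.var (y+1)))))))
  | .fn .mult ts, x =>
      let a := ts ⟨0, by decide⟩
      let b := ts ⟨1, by decide⟩
      let y := ((a.fv ∪ b.fv ∪ {x}).sup id) + 1
      .ex y (.ex (y+1) (.and (tmFlat a y) (.and (tmFlat b (y+1))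
        (mulA (.var y) (.var (y+1)) (.var x)))))

/-- Translation of formulas of the language of arithmetic into `L_RTC` over
`{0,s,+}`: multiplication `s·t` is translated by its TC definition, and
`s < t` by `s ≠ t ∧ (RTC_{w,u} s(w)=u)(s,t)`. -/
def caToAr : Fml caSig → Fml arSig
  | .eq s t =>
      match s.noMult, t.noMult with
      | some s', some t' => .eq s' t'
      | _, _ =>
        let x := ((s.fv ∪ t.fv).sup id) + 1
        .ex x (.and (tmFlat s x) (tmFlat t x))
  | .rel .lt ts =>
      let s := ts ⟨0, by decide⟩
      let t := ts ⟨1, by decide⟩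
      match s.noMult, t.noMult with
      | some s', some t' => ltA s' t'
      | _, _ =>
        let x := ((s.fv ∪ t.fv).sup id) + 1
        .ex x (.ex (x+1) (.and (tmFlat s x) (.and (tmFlat t (x+1))
          (ltA (.var x) (.var (x+1))))))
  | .not φ => .not (caToAr φ)
  | .and φ ψ => .and (caToAr φ) (caToAr ψ)
  | .or φ ψ => .or (caToAr φ) (caToAr ψ)
  | .imp φ ψ => .imp (caToAr φ) (caToAr ψ)
  | .all x φ => .all x (caToAr φ)
  | .ex x φ => .ex x (caToAr φ)
  | .rtc x y φ s t =>
      .rtc x y (caToAr φ) ((s.noMult).getD (.var 0)) ((t.noMult).getD (.var 0))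

/-! Call `a` and `b` interchangeable over `Γω` if, for all `F` and `x`, `F[a/x]` is provable from
`Γω` exactly when `F[b/x]` is. This is an equivalence relation. It relates `s` and `t` whenever
`s = t ∈ Γω`: a left equality rule applied below a cut-free proof gives a cut-free proof, and the
trace condition survives since every infinite path passes into the old proof. It is also a
congruence, because replacing one argument of `f(…)` is itself a substitution `F'[a/z]` for a
fresh variable `z`. Hence it contains `∼`. -/

theorem Function.rel_of_forall_rel_update {ι α : Type*} [Fintype ι] [DecidableEq ι]
    {R : (ι → α) → (ι → α) → Prop} {r : α → α → Prop} (hrefl : ∀ g, R g g)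
    (htrans : ∀ {g₁ g₂ g₃}, R g₁ g₂ → R g₂ g₃ → R g₁ g₃)
    (hupd : ∀ g i a b, r a b → R (Function.update g i a) (Function.update g i b))
    {ts us : ι → α} (h : ∀ i, r (ts i) (us i)) : R ts us := by
  suffices key : ∀ s : Finset ι, R ts (s.piecewise us ts) by
    simpa using key Finset.univ
  intro s
  induction s using Finset.induction_on with
  | empty => simpa using hrefl ts
  | insert j s hj ih =>
    refine htrans ih ?_
    have hself : Function.update (s.piecewise us ts) j (ts j) = s.piecewise us ts := by
      rw [← Finset.piecewise_eq_of_notMem s us ts hj, Function.update_eq_self]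
    rw [Finset.piecewise_insert]
    nth_rewrite 1 [← hself]
    exact hupd _ j _ _ (h j)

@[simp]
theorem sub1_self (x : ℕ) (t : Tm σ) : sub1 x t x = t := if_pos rfl

theorem sub1_of_ne {x n : ℕ} {t : Tm σ} (h : n ≠ x) : sub1 x t n = .var n := if_neg h

namespace Tm

theorem subst_subst (s : Tm σ) (f g : ℕ → Tm σ) :
    (s.subst f).subst g = s.subst fun n => (f n).subst g := by
  induction s with
  | var n => rfl
  | fn f0 ts ih => simp only [Tm.subst, ih]

theorem subst_congr {s : Tm σ} {f g : ℕ → Tm σ} (h : ∀ n ∈ s.fv, f n = g n) :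
    s.subst f = s.subst g := by
  induction s with
  | var n => exact h n (Finset.mem_singleton_self n)
  | fn f0 ts ih =>
    simp only [Tm.subst]
    congr 1
    funext i
    exact ih i fun n hn => h n (Finset.le_sup (f := fun i => (ts i).fv) (Finset.mem_univ i) hn)

theorem subst_var (s : Tm σ) : s.subst .var = s := by
  induction s with
  | var n => rfl
  | fn f0 ts ih => simp only [Tm.subst, ih]

theorem subst_sub1_of_notMem {s : Tm σ} {z : ℕ} (B : Tm σ) (h : z ∉ s.fv) :
    s.subst (sub1 z B) = s := by
  conv_rhs => rw [← s.subst_var]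
  exact subst_congr fun n hn => if_neg fun e : n = z => h (e ▸ hn)

end Tm

def Fml.bv : Fml σ → Finset ℕ
  | .eq _ _ => ∅
  | .rel _ _ => ∅
  | .not φ => φ.bv
  | .and φ ψ => φ.bv ∪ ψ.bv
  | .or φ ψ => φ.bv ∪ ψ.bv
  | .imp φ ψ => φ.bv ∪ ψ.bv
  | .all x φ => insert x φ.bv
  | .ex x φ => insert x φ.bv
  | .rtc x y φ _ _ => insert x (insert y φ.bv)

theorem bindV_eq_self {g : ℕ → Tm σ} {y : ℕ} (hy : g y = .var y) : bindV g y = g := by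
  funext n
  by_cases hn : n = y <;> simp [bindV, hn, hy]

theorem subst_bindV_eq_bindV {f g h : ℕ → Tm σ} {y : ℕ} {s : Finset ℕ} (hy : g y = .var y)
    (hfh : ∀ n ∈ s.erase y, (f n).subst g = h n) :
    ∀ n ∈ s, (bindV f y n).subst g = bindV h y n := by
  intro n hn
  by_cases hny : n = y
  · simp [bindV, hny, Tm.subst, hy]
  · simpa only [bindV, if_neg hny] using hfh n (Finset.mem_erase.mpr ⟨hny, hn⟩)

theorem Fml.subst_subst {φ : Fml σ} {f g h : ℕ → Tm σ}
    (hfv : ∀ n ∈ φ.fv, (f n).subst g = h n) (hbv : ∀ y ∈ φ.bv, g y = .var y) :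
    (φ.subst f).subst g = φ.subst h := by
  induction φ generalizing f h with
  | eq s t =>
    simp only [Fml.fv, Finset.mem_union] at hfv
    simp only [Fml.subst, Tm.subst_subst, Tm.subst_congr fun n hn => hfv n (.inl hn),
      Tm.subst_congr fun n hn => hfv n (.inr hn)]
  | rel r ts =>
    simp only [Fml.subst, Tm.subst_subst]
    congr 1
    funext i
    exact Tm.subst_congr fun n hn =>
      hfv n (Finset.le_sup (f := fun i => (ts i).fv) (Finset.mem_univ i) hn)
  | not φ ih => simp only [Fml.subst, ih hfv hbv]
  | and φ ψ ihφ ihψ | or φ ψ ihφ ihψ | imp φ ψ ihφ ihψ =>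
    simp only [Fml.fv, Fml.bv, Finset.mem_union] at hfv hbv
    simp only [Fml.subst, ihφ (fun n hn => hfv n (.inl hn)) (fun y hy => hbv y (.inl hy)),
      ihψ (fun n hn => hfv n (.inr hn)) (fun y hy => hbv y (.inr hy))]
  | all y φ ih | ex y φ ih =>
    simp only [Fml.fv, Fml.bv, Finset.mem_insert] at hfv hbv
    have hy : g y = .var y := hbv y (.inl rfl)
    simp only [Fml.subst, bindV_eq_self hy,
      ih (subst_bindV_eq_bindV hy hfv) (fun y' hy' => hbv y' (.inr hy'))]
  | rtc a b φ s t ih =>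
    simp only [Fml.fv, Fml.bv, Finset.mem_insert, Finset.mem_union] at hfv hbv
    have ha : g a = .var a := hbv a (.inl rfl)
    have hb : g b = .var b := hbv b (.inr (.inl rfl))
    have hbody := subst_bindV_eq_bindV hb (subst_bindV_eq_bindV (s := φ.fv.erase b) ha
      (fun n hn => hfv n (.inl (.inl (by rwa [Finset.erase_right_comm] at hn)))))
    simp only [Fml.subst, bindV_eq_self ha, bindV_eq_self hb, Tm.subst_subst,
      ih hbody (fun y hy => hbv y (.inr (.inr hy))),
      Tm.subst_congr fun n hn => hfv n (.inl (.inr hn)),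
      Tm.subst_congr fun n hn => hfv n (.inr hn)]

theorem Fml.subst1_fn_update_eq {F : Fml σ} {x z : ℕ} {f : σ.Fn} {g : Fin (σ.ar f) → Tm σ}
    {κ : Fin (σ.ar f)} (B : Tm σ) (hzF : z ∉ F.fv) (hzB : z ∉ F.bv)
    (hg : ∀ j ≠ κ, z ∉ (g j).fv) :
    F.subst1 x (.fn f (Function.update g κ B)) =
      (F.subst1 x (.fn f (Function.update g κ (.var z)))).subst1 z B := by
  refine (Fml.subst_subst (g := sub1 z B) (fun n hn => ?_)
    fun y hy => if_neg fun e : y = z => hzB (e ▸ hy)).symm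
  by_cases hnx : n = x
  · simp only [hnx, sub1_self, Tm.subst]
    congr 1
    funext j
    by_cases hj : j = κ
    · simp [hj, Tm.subst]
    · rw [Function.update_of_ne hj, Function.update_of_ne hj,
        Tm.subst_sub1_of_notMem B (hg j hj)]
  · have hnz : n ≠ z := fun e => hzF (e ▸ hn)
    simp only [sub1_of_ne hnx, Tm.subst, sub1_of_ne hnz]

namespace PrePf

def graftLabel (C : Sequent σ) (L : List ℕ → Option (Sequent σ)) : List ℕ → Option (Sequent σ)
  | [] => some C
  | 0 :: q => L q
  | (_ + 1) :: _ => none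

def graftRule (R : RuleApp σ) (L : List ℕ → Option (RuleApp σ)) : List ℕ → Option (RuleApp σ)
  | [] => some R
  | 0 :: q => L q
  | (_ + 1) :: _ => none

theorem label_nil (P : PrePf σ Ok H) : P.label [] = some P.root := (Option.some_get _).symm

noncomputable def graft (P : PrePf σ Ok H) (R : RuleApp σ) (hok : R.ok) (hR : Ok R)
    (hprems : R.prems = [P.root]) : PrePf σ Ok H where
  label := graftLabel R.concl P.label
  rule := graftRule R P.rule
  root_def := rfl
  prune
    | [], _, h => by simp [graftLabel] at h
    | 0 :: q, i, h => P.prune q i h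
    | (_ + 1) :: _, _, _ => rfl
  rule_spec
    | [], R', h => by
      obtain rfl : R = R' := Option.some.inj h
      refine ⟨hok, hR, rfl, fun i => ?_⟩
      match i with
      | 0 => simp [graftLabel, hprems, P.label_nil]
      | _ + 1 => simp [graftLabel, hprems]
    | 0 :: q, R', h => P.rule_spec q R' h
    | (_ + 1) :: _, _, h => by simp [graftRule] at h
  node_spec
    | [], _, _ => .inl rfl
    | 0 :: q, S, h => P.node_spec q S h
    | (_ + 1) :: _, _, h => by simp [graftLabel] at h
  rule_none
    | [], h => by simp [graftLabel] at h
    | 0 :: q, h => P.rule_none q h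
    | (_ + 1) :: _, _ => rfl

variable {P : PrePf σ Ok H} {R : RuleApp σ} {hok : R.ok} {hR : Ok R} {hprems : R.prems = [P.root]}

theorem graft_root : (P.graft R hok hR hprems).root = R.concl := rfl

theorem graft_cutFree (hP : P.CutFree) (hcut : ¬ R.isCut) : (P.graft R hok hR hprems).CutFree
  | [], R', h => by
    obtain rfl : R = R' := Option.some.inj h
    exact hcut
  | 0 :: q, R', h => hP q R' h
  | (_ + 1) :: _, _, h => by simp [graft, graftRule] at h

theorem graft_isPath {π : ℕ → List ℕ} (hπ : (P.graft R hok hR hprems).IsPath π) :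
    (∀ n, π (n + 1) = 0 :: (π (n + 1)).tail) ∧ P.IsPath fun n => (π (n + 1)).tail := by
  obtain ⟨h0, hstep⟩ := hπ
  have hcons : ∀ n, π (n + 1) = 0 :: (π (n + 1)).tail := by
    intro n
    induction n with
    | zero =>
      obtain ⟨i, hi⟩ := (hstep 0).1
      have hlabel := (hstep 1).2
      rw [hi, h0] at hlabel ⊢
      cases i with
      | zero => rfl
      | succ j => simp [graft, graftLabel] at hlabel
    | succ n ih =>
      obtain ⟨i, hi⟩ := (hstep (n + 1)).1
      rw [hi, ih]
      rfl
  refine ⟨hcons, ?_, fun n => ⟨?_, ?_⟩⟩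
  · obtain ⟨i, hi⟩ := (hstep 0).1
    simp [hi, h0]
  · obtain ⟨i, hi⟩ := (hstep (n + 1)).1
    refine ⟨i, ?_⟩
    show (π (n + 1 + 1)).tail = (π (n + 1)).tail ++ [i]
    rw [hi, hcons n]
    rfl
  · have hlabel := (hstep (n + 1)).2
    rwa [hcons n] at hlabel

section
variable {π π' : ℕ → List ℕ} (hπ : ∀ n, π (n + 1) = 0 :: π' n) {n : ℕ} {τ τ' : Fml σ}
include hπ

theorem graft_tpStep (h : P.TPStep π' n τ τ') :
    (P.graft R hok hR hprems).TPStep π (n + 1) τ τ' := by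
  obtain ⟨R', i, hr, hstep, htp⟩ := h
  exact ⟨R', i, by rwa [hπ n], by rw [hπ, hπ, hstep]; rfl, htp⟩

theorem graft_progStep (h : P.ProgStep π' n τ τ') :
    (P.graft R hok hR hprems).ProgStep π (n + 1) τ τ' := by
  obtain ⟨R', i, hr, hstep, hpr⟩ := h
  exact ⟨R', i, by rwa [hπ n], by rw [hπ, hπ, hstep]; rfl, hpr⟩

end

theorem graft_GTC (hP : P.GTC) : (P.graft R hok hR hprems).GTC := by
  intro π hπ
  obtain ⟨hcons, hπ'⟩ := graft_isPath hπ
  obtain ⟨k, τ, htrace, hprog⟩ := hP _ hπ'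
  refine ⟨k + 1, τ, fun n => ?_, fun n => ?_⟩
  · rw [Nat.add_right_comm]
    exact graft_tpStep hcons (htrace n)
  · obtain ⟨m, hm, hstep⟩ := hprog n
    refine ⟨m, hm, ?_⟩
    rw [Nat.add_right_comm]
    exact graft_progStep hcons hstep

end PrePf

theorem RTCOmegaCF.of_prems_eq_singleton {R : RuleApp σ} {S : Sequent σ} (hok : R.ok)
    (hR : okOmega R) (hcut : ¬ R.isCut) (hprems : R.prems = [S]) (h : RTCOmegaCF S) :
    RTCOmegaCF R.concl := by
  obtain ⟨P, rfl, hgtc, hcf⟩ := h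
  exact ⟨P.graft R hok hR hprems, PrePf.graft_root, PrePf.graft_GTC hgtc,
    PrePf.graft_cutFree hcf hcut⟩

def ProvableFrom (Γω : Set (Fml σ)) (φ : Fml σ) : Prop :=
  ∃ Γ : Finset (Fml σ), ↑Γ ⊆ Γω ∧ RTCOmegaCF (Γ, {φ})

theorem provableFrom_subst1_iff_of_eq_mem {Γω : Set (Fml σ)} {s t : Tm σ} (hst : .eq s t ∈ Γω)
    (F : Fml σ) (x : ℕ) : ProvableFrom Γω (F.subst1 x s) ↔ ProvableFrom Γω (F.subst1 x t) := by
  have hsub : ∀ {Γ : Finset (Fml σ)}, ↑Γ ⊆ Γω → ↑(insert (.eq s t) Γ) ⊆ Γω := fun hΓ => by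
    rw [Finset.coe_insert]
    exact Set.insert_subset hst hΓ
  constructor
  · rintro ⟨Γ, hΓ, hpf⟩
    refine ⟨_, hsub hΓ, ?_⟩
    simpa [RuleApp.concl] using RTCOmegaCF.of_prems_eq_singleton (R := .eqL1 Γ ∅ s t x F)
      trivial ⟨id, id, id, id⟩ id (by simp [RuleApp.prems]) hpf
  · rintro ⟨Γ, hΓ, hpf⟩
    refine ⟨_, hsub hΓ, ?_⟩
    simpa [RuleApp.concl] using RTCOmegaCF.of_prems_eq_singleton (R := .eqL2 Γ ∅ s t x F)
      trivial ⟨id, id, id, id⟩ id (by simp [RuleApp.prems]) hpf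

def SubstInterchangeable (Γω : Set (Fml σ)) (a b : Tm σ) : Prop :=
  ∀ (F : Fml σ) (x : ℕ), ProvableFrom Γω (F.subst1 x a) ↔ ProvableFrom Γω (F.subst1 x b)

namespace SubstInterchangeable

variable {Γω : Set (Fml σ)}

/-- For `z` fresh, `F[f(.., a, ..)/x]` is the instance `F'[a/z]` of `F' := F[f(.., z, ..)/x]`. -/
theorem fn_update {a b : Tm σ} (hab : SubstInterchangeable Γω a b) (f : σ.Fn)
    (g : Fin (σ.ar f) → Tm σ) (κ : Fin (σ.ar f)) :
    SubstInterchangeable Γω (.fn f (Function.update g κ a)) (.fn f (Function.update g κ b)) := by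
  intro F x
  obtain ⟨z, hz⟩ :=
    Infinite.exists_notMem_finset (F.fv ∪ F.bv ∪ Finset.univ.sup fun j => (g j).fv)
  simp only [Finset.mem_union, not_or] at hz
  obtain ⟨⟨hzF, hzB⟩, hzg⟩ := hz
  have hg : ∀ j ≠ κ, z ∉ (g j).fv := fun j _ hj =>
    hzg (Finset.le_sup (f := fun j => (g j).fv) (Finset.mem_univ j) hj)
  rw [Fml.subst1_fn_update_eq a hzF hzB hg, Fml.subst1_fn_update_eq b hzF hzB hg]
  exact hab _ z

theorem fn {f : σ.Fn} {ts us : Fin (σ.ar f) → Tm σ}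
    (h : ∀ i, SubstInterchangeable Γω (ts i) (us i)) :
    SubstInterchangeable Γω (.fn f ts) (.fn f us) :=
  Function.rel_of_forall_rel_update (R := fun g g' => SubstInterchangeable Γω (.fn f g) (.fn f g'))
    (fun _ _ _ => Iff.rfl) (fun h₁ h₂ F x => (h₁ F x).trans (h₂ F x))
    (fun g κ _ _ hab => hab.fn_update f g κ) h

end SubstInterchangeable

theorem TermCong.substInterchangeable {Γω : Set (Fml σ)} {t u : Tm σ} (h : TermCong Γω t u) :
    SubstInterchangeable Γω t u := by
  induction h with
  | base s t hst => exact provableFrom_subst1_iff_of_eq_mem hst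
  | refl t => exact fun _ _ => Iff.rfl
  | symm _ ih => exact fun F x => (ih F x).symm
  | trans _ _ ih₁ ih₂ => exact fun F x => (ih₁ F x).trans (ih₂ F x)
  | congr f ts us _ ih => exact SubstInterchangeable.fn ih

/-- Let `Γ_ω ⇒ Δ_ω` be the limit sequent of a failed search
tree and `∼` the smallest congruence on terms generated by the equations in
`Γ_ω`.  If `t ∼ u` then `Γ_ω ⇒ F[t/x]` is cut-free provable in `RTC^ω_G` iff
`Γ_ω ⇒ F[u/x]` is. -/
theorem limit_sequent_quotient
    (σ : Sig) (E : ℕ → SchedE σ) (hE : FairSched E) (S : Sequent σ)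
    (hnp : ¬ SearchIsProof (stages E S))
    (Γω Δω : Set (Fml σ)) (hlim : IsLimitSeq (stages E S) Γω Δω)
    (t u : Tm σ) (htu : TermCong Γω t u) (F : Fml σ) (x : ℕ) :
    (∃ Γ : Finset (Fml σ), ↑Γ ⊆ Γω ∧ RTCOmegaCF (Γ, {F.subst1 x t})) ↔
    (∃ Γ : Finset (Fml σ), ↑Γ ⊆ Γω ∧ RTCOmegaCF (Γ, {F.subst1 x u})) :=
  htu.substInterchangeable F x

end TCPaper
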